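/- arXiv:2110.02752 — 4 statements merged into one kernel-verified Lean document; each statement's English description precedes it below -/
import Mathlib

section
/- Let Σ be an M×M positive-definite matrix and set U = {U ∈ R^{M×M} : ‖Σ^{−1/2}U‖ ≤ 1}. For vectors v, w ∈ R^{2M·M} partitioned into 2M blocks v₁,…,v_{2M}, w₁,…,w_{2M} ∈ R^M, there exists U ∈ U with v = (I_{2M} ⊗ U)w if and only if WᵀW − VᵀΣ⁻¹V ⪰ 0, where V = [v₁ ⋯ v_{2M}] and W = [w₁ ⋯ w_{2M}] are the M×2M matrices with the blocks as columns. -/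
open Matrix
open scoped Matrix.Norms.L2Operator Kronecker

/-- The square root of a positive semidefinite matrix, as `Matrix.PosSemidef.sqrt` was defined
in Mathlib (Dec 2024); it has since been removed in favour of `CFC.sqrt`. -/
noncomputable def Matrix.PosSemidef.sqrt {n : Type*} [Fintype n] [DecidableEq n]
    {A : Matrix n n ℝ} (hA : A.PosSemidef) : Matrix n n ℝ :=
  (hA.1.eigenvectorUnitary : Matrix n n ℝ) * diagonal ((↑) ∘ (√·) ∘ hA.1.eigenvalues) *
    (star hA.1.eigenvectorUnitary : Matrix n n ℝ)

variable {m n : Type*} [Fintype m] [Fintype n] [DecidableEq m] [DecidableEq n]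

theorem my_sqrt_mul_self {A : Matrix n n ℝ} (hA : A.PosSemidef) : hA.sqrt * hA.sqrt = A := by
  have hu : (star hA.1.eigenvectorUnitary : Matrix n n ℝ) *
      (hA.1.eigenvectorUnitary : Matrix n n ℝ) = 1 :=
    Unitary.coe_star_mul_self _
  conv_rhs => rw [hA.1.spectral_theorem]
  simp only [Matrix.PosSemidef.sqrt, Unitary.conjStarAlgAut_apply, Matrix.mul_assoc]
  rw [← Matrix.mul_assoc (star _ : Matrix n n ℝ), hu, Matrix.one_mul,
    ← Matrix.mul_assoc (diagonal _), diagonal_mul_diagonal]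
  congr 3
  funext i
  simp [Real.mul_self_sqrt (hA.eigenvalues_nonneg i)]

theorem my_sqrt_herm {A : Matrix n n ℝ} (hA : A.PosSemidef) : hA.sqrt.IsHermitian := by
  simp [Matrix.IsHermitian, Matrix.PosSemidef.sqrt, star_eq_conjTranspose, Matrix.mul_assoc]

/-- norm square of euclidean vector is dot product -/
lemma my_norm_sq (y : n → ℝ) :
    ‖(WithLp.equiv 2 (n → ℝ)).symm y‖ ^ 2 = y ⬝ᵥ y := by
  rw [EuclideanSpace.norm_sq_eq]; simp [dotProduct, Real.norm_eq_abs, sq]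

/-- contraction exists iff pointwise bound -/
lemma my_exists_contraction (A B : Matrix n m ℝ)
    (h : ∀ x : EuclideanSpace ℝ m, ‖toEuclideanLin A x‖ ≤ ‖toEuclideanLin B x‖) :
    ∃ Z : Matrix n n ℝ, ‖Z‖ ≤ 1 ∧ A = Z * B := by
  classical
  set f := toEuclideanLin B with hf
  set g := toEuclideanLin A with hg
  have hker : LinearMap.ker f ≤ LinearMap.ker g := by
    intro x hx
    rw [LinearMap.mem_ker] at hx ⊢
    have := h x
    rw [hx, norm_zero] at this
    exact norm_le_zero_iff.mp this
  set K := LinearMap.range f with hK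
  let h₁ : (EuclideanSpace ℝ m ⧸ LinearMap.ker f) →ₗ[ℝ] EuclideanSpace ℝ n :=
    (LinearMap.ker f).liftQ g hker
  let e := f.quotKerEquivRange
  let h₀ : K →ₗ[ℝ] EuclideanSpace ℝ n := h₁ ∘ₗ (e.symm : K →ₗ[ℝ] _)
  let P := K.orthogonalProjectionOnto
  let T : EuclideanSpace ℝ n →ₗ[ℝ] EuclideanSpace ℝ n :=
    h₀ ∘ₗ (P : EuclideanSpace ℝ n →L[ℝ] K).toLinearMap
  have h₀_apply : ∀ (x : EuclideanSpace ℝ m) (hx : f x ∈ K), h₀ ⟨f x, hx⟩ = g x := by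
    intro x hx
    have he : e.symm ⟨f x, hx⟩ = Submodule.Quotient.mk x :=
      f.quotKerEquivRange_symm_apply_image x hx
    simp only [h₀, LinearMap.comp_apply, LinearEquiv.coe_coe, he]
    exact Submodule.liftQ_apply _ g x
  have hT_norm : ∀ y : EuclideanSpace ℝ n, ‖T y‖ ≤ ‖y‖ := by
    intro y
    obtain ⟨x, hx⟩ := (P y).2
    have hPy : (⟨f x, by rw [hx]; exact (P y).2⟩ : K) = P y := Subtype.ext hx
    have hTy : T y = g x := by
      show h₀ (P y) = g x
      rw [← hPy, h₀_apply]
    rw [hTy]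
    calc ‖g x‖ ≤ ‖f x‖ := h x
      _ = ‖(P y : EuclideanSpace ℝ n)‖ := by rw [hx]
      _ = ‖P y‖ := rfl
      _ ≤ ‖(P : EuclideanSpace ℝ n →L[ℝ] K)‖ * ‖y‖ := (P : _ →L[ℝ] K).le_opNorm y
      _ ≤ 1 * ‖y‖ := by
          exact mul_le_mul_of_nonneg_right (K.orthogonalProjectionOnto_norm_le) (norm_nonneg y)
      _ = ‖y‖ := one_mul _
  have hTf : ∀ x, T (f x) = g x := by
    intro x
    have hfx : f x ∈ K := LinearMap.mem_range_self f x
    have hP : ((P (f x) : K) : EuclideanSpace ℝ n) = f x :=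
      K.starProjection_eq_self_iff.mpr hfx
    show h₀ (P (f x)) = g x
    have : (P (f x) : K) = ⟨f x, hfx⟩ := Subtype.ext hP
    rw [this, h₀_apply]
  refine ⟨toEuclideanLin.symm T, ?_, ?_⟩
  · rw [Matrix.l2_opNorm_def]
    refine ContinuousLinearMap.opNorm_le_bound _ zero_le_one fun x => ?_
    rw [one_mul]
    have : ((toEuclideanLin.trans LinearMap.toContinuousLinearMap)
        (toEuclideanLin.symm T)) x = T x := by
      simp only [LinearEquiv.trans_apply, LinearEquiv.apply_symm_apply]
      rfl
    rw [this]
    exact hT_norm x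
  · apply toEuclideanLin.injective
    have hcomp : toEuclideanLin (toEuclideanLin.symm T * B)
        = (toEuclideanLin (toEuclideanLin.symm T)).comp (toEuclideanLin B) := by
      rw [toEuclideanLin_eq_toLin]
      exact Matrix.toLin_mul _ (PiLp.basisFun 2 ℝ n) _ _ _
    rw [hcomp, LinearEquiv.apply_symm_apply]
    exact LinearMap.ext fun x => (hTf x).symm

/-- forward: contraction gives pointwise bound -/
lemma my_contraction_bound (A B : Matrix n m ℝ) (Z : Matrix n n ℝ)
    (hZ : ‖Z‖ ≤ 1) (hA : A = Z * B) :
    ∀ x : EuclideanSpace ℝ m, ‖toEuclideanLin A x‖ ≤ ‖toEuclideanLin B x‖ := by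
  intro x
  have hcomp : toEuclideanLin A = (toEuclideanLin Z).comp (toEuclideanLin B) := by
    rw [hA, toEuclideanLin_eq_toLin]
    exact Matrix.toLin_mul _ (PiLp.basisFun 2 ℝ n) _ _ _
  rw [hcomp]
  calc ‖(toEuclideanLin Z) (toEuclideanLin B x)‖
      = ‖((toEuclideanLin.trans LinearMap.toContinuousLinearMap) Z) (toEuclideanLin B x)‖ := rfl
    _ ≤ ‖(toEuclideanLin.trans LinearMap.toContinuousLinearMap) Z‖ * ‖toEuclideanLin B x‖ :=
        ContinuousLinearMap.le_opNorm _ _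
    _ = ‖Z‖ * ‖toEuclideanLin B x‖ := by rw [← Matrix.l2_opNorm_def]
    _ ≤ 1 * ‖toEuclideanLin B x‖ :=
        mul_le_mul_of_nonneg_right hZ (norm_nonneg _)
    _ = ‖toEuclideanLin B x‖ := one_mul _

/-- PSD iff pointwise bound -/
lemma my_psd_iff (A B : Matrix n m ℝ) :
    (Bᵀ * B - Aᵀ * A).PosSemidef ↔
      ∀ x : EuclideanSpace ℝ m, ‖toEuclideanLin A x‖ ≤ ‖toEuclideanLin B x‖ := by
  have herm : (Bᵀ * B - Aᵀ * A).IsHermitian := by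
    have h1 : (Bᵀ * B).IsHermitian := by simpa [conjTranspose_eq_transpose_of_trivial] using isHermitian_conjTranspose_mul_self B
    have h2 : (Aᵀ * A).IsHermitian := by simpa [conjTranspose_eq_transpose_of_trivial] using isHermitian_conjTranspose_mul_self A
    exact h1.sub h2
  have key : ∀ x : m → ℝ,
      x ⬝ᵥ ((Bᵀ * B - Aᵀ * A) *ᵥ x) = (B *ᵥ x) ⬝ᵥ (B *ᵥ x) - (A *ᵥ x) ⬝ᵥ (A *ᵥ x) := by
    intro x
    rw [Matrix.sub_mulVec, dotProduct_sub, ← Matrix.mulVec_mulVec, ← Matrix.mulVec_mulVec,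
      Matrix.dotProduct_mulVec x Bᵀ, Matrix.dotProduct_mulVec x Aᵀ,
      Matrix.vecMul_transpose, Matrix.vecMul_transpose]
  constructor
  · intro hpsd x
    have h0 := hpsd.dotProduct_mulVec_nonneg (WithLp.equiv 2 (m → ℝ) x)
    rw [star_trivial, key] at h0
    have hA2 : ‖toEuclideanLin A x‖ ^ 2 = (A *ᵥ (WithLp.equiv 2 (m → ℝ)) x) ⬝ᵥ
        (A *ᵥ (WithLp.equiv 2 (m → ℝ)) x) := by
      rw [toEuclideanLin_apply]; exact my_norm_sq _
    have hB2 : ‖toEuclideanLin B x‖ ^ 2 = (B *ᵥ (WithLp.equiv 2 (m → ℝ)) x) ⬝ᵥ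
        (B *ᵥ (WithLp.equiv 2 (m → ℝ)) x) := by
      rw [toEuclideanLin_apply]; exact my_norm_sq _
    have : ‖toEuclideanLin A x‖ ^ 2 ≤ ‖toEuclideanLin B x‖ ^ 2 := by
      rw [hA2, hB2]; linarith
    exact (pow_le_pow_iff_left₀ (norm_nonneg _) (norm_nonneg _) two_ne_zero).mp this
  · intro h
    refine .of_dotProduct_mulVec_nonneg herm fun x => ?_
    rw [star_trivial, key]
    have hx := h ((WithLp.equiv 2 (m → ℝ)).symm x)
    have hA2 : ‖toEuclideanLin A ((WithLp.equiv 2 (m → ℝ)).symm x)‖ ^ 2 = (A *ᵥ x) ⬝ᵥ (A *ᵥ x) := by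
      rw [toEuclideanLin_apply_piLp_toLp]; exact my_norm_sq _
    have hB2 : ‖toEuclideanLin B ((WithLp.equiv 2 (m → ℝ)).symm x)‖ ^ 2 = (B *ᵥ x) ⬝ᵥ (B *ᵥ x) := by
      rw [toEuclideanLin_apply_piLp_toLp]; exact my_norm_sq _
    have := pow_le_pow_left₀ (norm_nonneg _) hx 2
    rw [hA2, hB2] at this
    linarith

/-- there exists U with ‖Σ^{−1/2}U‖ ≤ 1 and v = (I_{2M} ⊗ U)w iff
WᵀW − VᵀΣ⁻¹V ⪰ 0, where V, W collect the 2M blocks of v, w as columns. -/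
theorem stmt_6 (M : ℕ) (S : Matrix (Fin M) (Fin M) ℝ) (hS : S.PosDef)
    (v w : Fin (2 * M) × Fin M → ℝ) :
    (∃ U : Matrix (Fin M) (Fin M) ℝ, ‖hS.posSemidef.sqrt⁻¹ * U‖ ≤ 1 ∧
        v = ((1 : Matrix (Fin (2 * M)) (Fin (2 * M)) ℝ) ⊗ₖ U) *ᵥ w) ↔
      ((Matrix.of fun (j : Fin M) (k : Fin (2 * M)) => w (k, j))ᵀ *
          (Matrix.of fun (j : Fin M) (k : Fin (2 * M)) => w (k, j)) -
        (Matrix.of fun (j : Fin M) (k : Fin (2 * M)) => v (k, j))ᵀ * S⁻¹ *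
          (Matrix.of fun (j : Fin M) (k : Fin (2 * M)) => v (k, j))).PosSemidef := by
  classical
  set V : Matrix (Fin M) (Fin (2 * M)) ℝ :=
    Matrix.of fun (j : Fin M) (k : Fin (2 * M)) => v (k, j) with hVdef
  set W : Matrix (Fin M) (Fin (2 * M)) ℝ :=
    Matrix.of fun (j : Fin M) (k : Fin (2 * M)) => w (k, j) with hWdef
  set R := hS.posSemidef.sqrt with hRdef
  have hh : R.IsHermitian := my_sqrt_herm hS.posSemidef
  have hRherm : Rᵀ = R := by
    ext i j
    conv_rhs => rw [← hh]
    simp [Matrix.conjTranspose_apply]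
  have hdet : R.det * R.det = S.det := by
    rw [← Matrix.det_mul, my_sqrt_mul_self hS.posSemidef]
  have hdetR : IsUnit R.det := by
    apply isUnit_iff_ne_zero.mpr
    intro h0
    rw [h0, mul_zero] at hdet
    exact hS.det_pos.ne' hdet.symm
  have hRinvR : R⁻¹ * R = 1 := Matrix.nonsing_inv_mul R hdetR
  have hRRinv : R * R⁻¹ = 1 := Matrix.mul_nonsing_inv R hdetR
  have hRinvT : (R⁻¹)ᵀ = R⁻¹ := by rw [Matrix.transpose_nonsing_inv, hRherm]
  have hSinv : S⁻¹ = R⁻¹ * R⁻¹ := by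
    conv_lhs => rw [← my_sqrt_mul_self hS.posSemidef]
    rw [Matrix.mul_inv_rev]
  have hcompo : ∀ (U : Matrix (Fin M) (Fin M) ℝ) (k : Fin (2 * M)) (j : Fin M),
      (((1 : Matrix (Fin (2 * M)) (Fin (2 * M)) ℝ) ⊗ₖ U) *ᵥ w) (k, j) = (U * W) j k := by
    intro U k j
    simp [Matrix.mulVec, dotProduct, Fintype.sum_prod_type, Matrix.kroneckerMap_apply,
      Matrix.one_apply, Matrix.mul_apply, ite_mul, one_mul, zero_mul, Finset.sum_ite_eq, hWdef]
  have hkron : ∀ U : Matrix (Fin M) (Fin M) ℝ,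
      (v = ((1 : Matrix (Fin (2 * M)) (Fin (2 * M)) ℝ) ⊗ₖ U) *ᵥ w ↔ V = U * W) := by
    intro U
    rw [funext_iff, ← Matrix.ext_iff]
    constructor
    · intro hv j k
      rw [← hcompo U k j]
      exact hv (k, j)
    · rintro hM ⟨k, j⟩
      rw [hcompo U k j]
      exact hM j k
  have hAA : (R⁻¹ * V)ᵀ * (R⁻¹ * V) = Vᵀ * S⁻¹ * V := by
    rw [Matrix.transpose_mul, hRinvT, hSinv]
    simp only [Matrix.mul_assoc]
  constructor
  · rintro ⟨U, hU, hv⟩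
    have hVU : V = U * W := (hkron U).mp hv
    have hA : R⁻¹ * V = (R⁻¹ * U) * W := by rw [hVU, Matrix.mul_assoc]
    have hb := my_contraction_bound (R⁻¹ * V) W (R⁻¹ * U) hU hA
    have := (my_psd_iff (R⁻¹ * V) W).mpr hb
    rwa [hAA] at this
  · intro hpsd
    have hb := (my_psd_iff (R⁻¹ * V) W).mp (by rwa [hAA])
    obtain ⟨Z, hZ, hZA⟩ := my_exists_contraction _ _ hb
    refine ⟨R * Z, ?_, (hkron (R * Z)).mpr ?_⟩
    · rw [← Matrix.mul_assoc, hRinvR, Matrix.one_mul]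
      exact hZ
    · rw [Matrix.mul_assoc, ← hZA, ← Matrix.mul_assoc, hRRinv, Matrix.one_mul]
end

section
/- For matrices V, W ∈ R^{M×N}, there exists a matrix Z ∈ R^{M×M} with ZᵀZ ⪯ I (spectral norm at most 1) such that V = ZW if and only if WᵀW − VᵀV ⪰ 0. -/
open Matrix

lemma aux_norm_sq {m n : Type*} [Fintype m] [Fintype n] [DecidableEq n] (A : Matrix m n ℝ)
    (x : EuclideanSpace ℝ n) :
    ‖Matrix.toEuclideanLin A x‖ ^ 2 =
      (WithLp.equiv 2 (n → ℝ) x) ⬝ᵥ ((Aᵀ * A) *ᵥ (WithLp.equiv 2 (n → ℝ) x)) := by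
  rw [← real_inner_self_eq_norm_sq, EuclideanSpace.inner_eq_star_dotProduct]
  simp only [Matrix.piLp_ofLp_toEuclideanLin, WithLp.equiv_apply, Matrix.toLin'_apply, star_trivial,
    ← Matrix.mulVec_mulVec, Matrix.dotProduct_mulVec, Matrix.vecMul_transpose]

lemma aux_mul_apply {M N : ℕ} (A : Matrix (Fin M) (Fin M) ℝ) (B : Matrix (Fin M) (Fin N) ℝ)
    (x : EuclideanSpace ℝ (Fin N)) :
    Matrix.toEuclideanLin (A * B) x = Matrix.toEuclideanLin A (Matrix.toEuclideanLin B x) := by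
  simp [Matrix.toEuclideanLin_apply, Matrix.mulVec_mulVec]

/-- ∃ Z with ZᵀZ ⪯ I and V = ZW iff WᵀW − VᵀV ⪰ 0. -/
theorem stmt_7 (M N : ℕ) (V W : Matrix (Fin M) (Fin N) ℝ) :
    (∃ Z : Matrix (Fin M) (Fin M) ℝ,
        ((1 : Matrix (Fin M) (Fin M) ℝ) - Zᵀ * Z).PosSemidef ∧ V = Z * W) ↔
      (Wᵀ * W - Vᵀ * V).PosSemidef := by
  constructor
  · rintro ⟨Z, hZ, rfl⟩
    have key : Wᵀ * W - (Z * W)ᵀ * (Z * W)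
        = Wᴴ * ((1 : Matrix (Fin M) (Fin M) ℝ) - Zᵀ * Z) * W := by
      rw [Matrix.conjTranspose_eq_transpose_of_trivial]
      simp [Matrix.transpose_mul, Matrix.mul_sub, Matrix.sub_mul, Matrix.mul_assoc]
    rw [key]
    exact hZ.conjTranspose_mul_mul_same W
  · intro h
    set W' := Matrix.toEuclideanLin W with hW'
    set V' := Matrix.toEuclideanLin V with hV'
    have hVW : ∀ y : EuclideanSpace ℝ (Fin N), ‖V' y‖ ≤ ‖W' y‖ := by
      intro y
      have h0 := h.dotProduct_mulVec_nonneg (WithLp.equiv 2 (Fin N → ℝ) y)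
      rw [star_trivial, Matrix.sub_mulVec, dotProduct_sub] at h0
      have hw := aux_norm_sq W y
      have hv := aux_norm_sq V y
      have hsq : ‖V' y‖ ^ 2 ≤ ‖W' y‖ ^ 2 := by
        rw [hW', hV', hw, hv]; linarith
      exact (abs_le_of_sq_le_sq' hsq (norm_nonneg _)).2
    -- the range of W'
    set S := LinearMap.range W' with hS
    have hker : LinearMap.ker W' ≤ LinearMap.ker V' := by
      intro y hy
      rw [LinearMap.mem_ker] at hy ⊢
      have := hVW y
      rw [hy, norm_zero] at this
      exact norm_le_zero_iff.mp this
    set Vbar := (LinearMap.ker W').liftQ V' hker with hVbar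
    set T : S →ₗ[ℝ] EuclideanSpace ℝ (Fin M) :=
      Vbar ∘ₗ (W'.quotKerEquivRange.symm : S →ₗ[ℝ] _) with hTdef
    have hT : ∀ y : EuclideanSpace ℝ (Fin N), ∀ hm : W' y ∈ S, T ⟨W' y, hm⟩ = V' y := by
      intro y hm
      have h1 : W'.quotKerEquivRange.symm ⟨W' y, hm⟩ = Submodule.Quotient.mk y := by
        rw [LinearEquiv.symm_apply_eq]
        exact Subtype.ext (W'.quotKerEquivRange_apply_mk y).symm
      simp [hTdef, h1, hVbar, Submodule.liftQ_apply]
    have hTnorm : ∀ s : S, ‖T s‖ ≤ ‖(s : EuclideanSpace ℝ (Fin M))‖ := by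
      rintro ⟨-, y, rfl⟩
      exact (congrArg norm (hT y _)).trans_le (hVW y)
    set P := Submodule.orthogonalProjectionOnto S with hP
    set Z' : EuclideanSpace ℝ (Fin M) →ₗ[ℝ] EuclideanSpace ℝ (Fin M) :=
      T ∘ₗ (P : EuclideanSpace ℝ (Fin M) →L[ℝ] S).toLinearMap with hZ'def
    have hZW : ∀ y, Z' (W' y) = V' y := by
      intro y
      have : P (W' y) = ⟨W' y, LinearMap.mem_range_self W' y⟩ :=
        Submodule.orthogonalProjectionOnto_mem_subspace_eq_self ⟨W' y, LinearMap.mem_range_self W' y⟩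
      simp only [hZ'def, LinearMap.comp_apply, ContinuousLinearMap.coe_coe, this]
      exact hT y _
    have hZnorm : ∀ x, ‖Z' x‖ ≤ ‖x‖ := by
      intro x
      refine (hTnorm (P x)).trans ?_
      have h1 : ‖((P x : EuclideanSpace ℝ (Fin M)))‖ = ‖P x‖ := rfl
      rw [h1]
      calc ‖P x‖ ≤ ‖P‖ * ‖x‖ := P.le_opNorm x
        _ ≤ 1 * ‖x‖ := by
            exact mul_le_mul_of_nonneg_right (Submodule.orthogonalProjectionOnto_norm_le S) (norm_nonneg x)
        _ = ‖x‖ := one_mul _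
    refine ⟨Matrix.toEuclideanLin.symm Z', ?_, ?_⟩
    · set Z := Matrix.toEuclideanLin.symm Z' with hZdef
      have hZ : Matrix.toEuclideanLin Z = Z' := Matrix.toEuclideanLin.apply_symm_apply Z'
      refine Matrix.PosSemidef.of_dotProduct_mulVec_nonneg ?_ ?_
      · show _ = _
        rw [Matrix.conjTranspose_eq_transpose_of_trivial]
        simp [Matrix.transpose_sub, Matrix.transpose_mul]
      · intro x
        rw [star_trivial, Matrix.sub_mulVec, dotProduct_sub, Matrix.one_mulVec, sub_nonneg]
        have hx : WithLp.equiv 2 (Fin M → ℝ) ((WithLp.equiv 2 (Fin M → ℝ)).symm x) = x :=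
          (WithLp.equiv 2 (Fin M → ℝ)).apply_symm_apply x
        have h1 := aux_norm_sq Z ((WithLp.equiv 2 (Fin M → ℝ)).symm x)
        rw [hx, hZ] at h1
        have h2 : x ⬝ᵥ x = ‖(WithLp.equiv 2 (Fin M → ℝ)).symm x‖ ^ 2 := by
          rw [← real_inner_self_eq_norm_sq, EuclideanSpace.inner_eq_star_dotProduct, WithLp.equiv_symm_apply, WithLp.ofLp_toLp,
            star_trivial]
        rw [← h1, h2]
        have := hZnorm ((WithLp.equiv 2 (Fin M → ℝ)).symm x)
        exact pow_le_pow_left₀ (norm_nonneg _) this 2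
    · apply Matrix.toEuclideanLin.injective
      ext x : 1
      rw [aux_mul_apply, Matrix.toEuclideanLin.apply_symm_apply, ← hW', hZW, hV']
end

section
/- For scalars v, w ∈ R^n (vectors) the following equivalence holds: there exists u ∈ [−1,1] with v = u·w if and only if v vᵀ ⪯ w wᵀ. -/
open Matrix

private lemma quad_form (n : ℕ) (a x : Fin n → ℝ) :
    x ⬝ᵥ (vecMulVec a a *ᵥ x) = (a ⬝ᵥ x) ^ 2 := by
  have h : vecMulVec a a *ᵥ x = (a ⬝ᵥ x) • a := by
    ext i
    simp [mulVec, vecMulVec_apply, dotProduct, Finset.mul_sum, mul_comm, mul_assoc, mul_left_comm]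
  rw [h, dotProduct_smul, dotProduct_comm, smul_eq_mul, sq]

private lemma herm_vmv (n : ℕ) (a : Fin n → ℝ) : (vecMulVec a a).IsHermitian := by
  unfold Matrix.IsHermitian
  ext i j
  simp [vecMulVec_apply, mul_comm]

/-- ∃ u ∈ [−1,1] with v = u·w iff vvᵀ ⪯ wwᵀ. -/
theorem stmt_8 (n : ℕ) (v w : Fin n → ℝ) :
    (∃ u : ℝ, u ∈ Set.Icc (-1 : ℝ) 1 ∧ v = u • w) ↔
      (vecMulVec w w - vecMulVec v v).PosSemidef := by
  constructor
  · rintro ⟨u, ⟨hu1, hu2⟩, rfl⟩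
    refine .of_dotProduct_mulVec_nonneg ((herm_vmv n w).sub (herm_vmv n _)) fun x => ?_
    have hx : star x = x := rfl
    rw [hx, sub_mulVec, dotProduct_sub, quad_form, quad_form, smul_dotProduct, smul_eq_mul]
    have h1 : u ^ 2 ≤ 1 := by nlinarith
    nlinarith [mul_nonneg (sub_nonneg.2 h1) (sq_nonneg (w ⬝ᵥ x))]
  · rw [posSemidef_iff_dotProduct_mulVec]; rintro ⟨hH, hq⟩
    have key : ∀ x : Fin n → ℝ, (v ⬝ᵥ x) ^ 2 ≤ (w ⬝ᵥ x) ^ 2 := by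
      intro x
      have h := hq x
      have hx : star x = x := rfl
      rw [hx, sub_mulVec, dotProduct_sub, quad_form, quad_form] at h
      linarith
    by_cases hw : w = 0
    · have hv : v = 0 := by
        rw [← dotProduct_self_eq_zero (v := v)]
        have := key v
        simp [hw] at this
        simp [this]
      exact ⟨0, ⟨by norm_num, by norm_num⟩, by simp [hv]⟩
    · set W := w ⬝ᵥ w with hW
      set V := v ⬝ᵥ v with hV
      set c := w ⬝ᵥ v with hc
      have hWpos : 0 < W := by
        rcases lt_or_eq_of_le (Finset.sum_nonneg fun i _ => mul_self_nonneg (w i)) with h | h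
        · exact h
        · exact absurd (dotProduct_self_eq_zero.mp h.symm) hw
      have hWV : W * V = c ^ 2 := by
        have h0 : w ⬝ᵥ (W • v - c • w) = 0 := by
          rw [dotProduct_sub, dotProduct_smul, dotProduct_smul]
          simp [smul_eq_mul, ← hc, ← hW]
          ring
        have h1 := key (W • v - c • w)
        rw [h0] at h1
        have h1' : (v ⬝ᵥ (W • v - c • w)) ^ 2 ≤ 0 := by
          calc (v ⬝ᵥ (W • v - c • w)) ^ 2 ≤ (0:ℝ) ^ 2 := h1
            _ = 0 := by ring
        have h2 : v ⬝ᵥ (W • v - c • w) = 0 :=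
          pow_eq_zero_iff (n := 2) (by norm_num) |>.mp (le_antisymm h1' (sq_nonneg _))
        rw [dotProduct_sub, dotProduct_smul, dotProduct_smul, smul_eq_mul, smul_eq_mul,
          dotProduct_comm v w, ← hV, ← hc] at h2
        nlinarith [h2]
      set u := c / W with hu
      have hvu : v = u • w := by
        have hd : (v - u • w) ⬝ᵥ (v - u • w) = 0 := by
          rw [sub_dotProduct, dotProduct_sub, dotProduct_sub, smul_dotProduct,
            dotProduct_smul, smul_dotProduct, dotProduct_comm v w]
          simp only [smul_eq_mul, ← hV, ← hc, ← hW]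
          rw [dotProduct_smul, smul_eq_mul, ← hW, hu]
          field_simp
          nlinarith [hWV]
        have := dotProduct_self_eq_zero.mp hd
        exact sub_eq_zero.mp this
      have hc2 : c ^ 2 ≤ W ^ 2 := by
        have := key w
        rwa [dotProduct_comm v w, ← hc, ← hW] at this
      have hu2 : u ^ 2 ≤ 1 := by
        rw [hu, div_pow]
        rw [div_le_one (by positivity)]
        exact hc2
      refine ⟨u, ⟨?_, ?_⟩, hvu⟩ <;> nlinarith [hu2]
end

section
/- Let F(U) = B(I_p ⊗ U)(I − C(I_p ⊗ U))⁻¹ d + a be an LFR and let G, H be matrices of compatible sizes. Then F(GUH) = B'(I_p ⊗ U)(I − C'(I_p ⊗ U))⁻¹ d' + a, where C' = (I_p ⊗ H)C(I_p ⊗ G), d' = (I_p ⊗ H)d, B' = B(I_p ⊗ G); moreover the left LFR is well-posed at GUH iff the right LFR is well-posed at U. -/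
open Matrix
open scoped Kronecker

private lemma aux_inv_comm {n m : Type*} [Fintype n] [Fintype m] [DecidableEq n] [DecidableEq m]
    (X : Matrix n m ℝ) (Y : Matrix m n ℝ) :
    Y * (1 - X * Y)⁻¹ = (1 - Y * X)⁻¹ * Y := by
  have hdet : (1 - X * Y).det = (1 - Y * X).det := Matrix.det_one_sub_mul_comm X Y
  have hcomm : (1 - Y * X) * Y = Y * (1 - X * Y) := by
    simp [Matrix.sub_mul, Matrix.mul_sub, Matrix.mul_assoc]
  by_cases h : IsUnit (1 - X * Y).det
  · have h2 : IsUnit (1 - Y * X).det := hdet ▸ h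
    calc Y * (1 - X * Y)⁻¹
        = ((1 - Y * X)⁻¹ * (1 - Y * X)) * (Y * (1 - X * Y)⁻¹) := by
          rw [Matrix.nonsing_inv_mul _ h2, Matrix.one_mul]
      _ = (1 - Y * X)⁻¹ * (((1 - Y * X) * Y) * (1 - X * Y)⁻¹) := by
          simp only [Matrix.mul_assoc]
      _ = (1 - Y * X)⁻¹ * (Y * ((1 - X * Y) * (1 - X * Y)⁻¹)) := by
          rw [hcomm]; simp only [Matrix.mul_assoc]
      _ = (1 - Y * X)⁻¹ * Y := by
          rw [Matrix.mul_nonsing_inv _ h, Matrix.mul_one]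
  · have h2 : ¬ IsUnit (1 - Y * X).det := hdet ▸ h
    rw [Matrix.nonsing_inv_apply_not_isUnit _ h, Matrix.nonsing_inv_apply_not_isUnit _ h2,
      Matrix.mul_zero, Matrix.zero_mul]

/-- The linear-fractional representation map. -/
noncomputable def lfr {ι a b m : Type*} [Fintype ι] [Fintype a] [Fintype b]
    [DecidableEq ι] [DecidableEq b]
    (C : Matrix (ι × b) (ι × a) ℝ) (dv : ι × b → ℝ)
    (B : Matrix m (ι × a) ℝ) (av : m → ℝ)
    (Δ : Matrix a b ℝ) : m → ℝ :=
  B *ᵥ (((1 : Matrix ι ι ℝ) ⊗ₖ Δ) *ᵥ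
    ((1 - C * ((1 : Matrix ι ι ℝ) ⊗ₖ Δ))⁻¹ *ᵥ dv)) + av

/-- composing an LFR with the linear map U ↦ GUH yields the LFR with
data C' = (I⊗H)C(I⊗G), d' = (I⊗H)d, B' = B(I⊗G); well-posedness is equivalent. -/
theorem stmt_10 {ι a b a' b' m : Type*} [Fintype ι] [Fintype a] [Fintype b]
    [Fintype a'] [Fintype b'] [DecidableEq ι] [DecidableEq b] [DecidableEq b']
    (C : Matrix (ι × b') (ι × a') ℝ) (dv : ι × b' → ℝ)
    (B : Matrix m (ι × a') ℝ) (av : m → ℝ)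
    (G : Matrix a' a ℝ) (H : Matrix b b' ℝ) (U : Matrix a b ℝ) :
    lfr C dv B av (G * U * H) =
      lfr (((1 : Matrix ι ι ℝ) ⊗ₖ H) * C * ((1 : Matrix ι ι ℝ) ⊗ₖ G))
        (((1 : Matrix ι ι ℝ) ⊗ₖ H) *ᵥ dv)
        (B * ((1 : Matrix ι ι ℝ) ⊗ₖ G)) av U ∧
    (IsUnit (1 - C * ((1 : Matrix ι ι ℝ) ⊗ₖ (G * U * H))) ↔
      IsUnit (1 - (((1 : Matrix ι ι ℝ) ⊗ₖ H) * C * ((1 : Matrix ι ι ℝ) ⊗ₖ G)) *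
        ((1 : Matrix ι ι ℝ) ⊗ₖ U))) := by
  have hk : ((1 : Matrix ι ι ℝ) ⊗ₖ (G * U * H)) =
      ((1 : Matrix ι ι ℝ) ⊗ₖ G) * ((1 : Matrix ι ι ℝ) ⊗ₖ U) * ((1 : Matrix ι ι ℝ) ⊗ₖ H) := by
    rw [← Matrix.mul_kronecker_mul, ← Matrix.mul_kronecker_mul, Matrix.one_mul, Matrix.one_mul]
  set X : Matrix (ι × b') (ι × b) ℝ :=
    C * ((1 : Matrix ι ι ℝ) ⊗ₖ G) * ((1 : Matrix ι ι ℝ) ⊗ₖ U) with hX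
  set Y : Matrix (ι × b) (ι × b') ℝ := (1 : Matrix ι ι ℝ) ⊗ₖ H with hY
  have hXY : C * ((1 : Matrix ι ι ℝ) ⊗ₖ (G * U * H)) = X * Y := by
    rw [hk, hX, hY]; simp only [Matrix.mul_assoc]
  have hYX : (((1 : Matrix ι ι ℝ) ⊗ₖ H) * C * ((1 : Matrix ι ι ℝ) ⊗ₖ G)) *
      ((1 : Matrix ι ι ℝ) ⊗ₖ U) = Y * X := by
    rw [hX, hY]; simp only [Matrix.mul_assoc]
  have hdet : (1 - X * Y).det = (1 - Y * X).det := Matrix.det_one_sub_mul_comm X Y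
  constructor
  · unfold lfr
    rw [hXY, hYX, hk]
    congr 1
    simp only [Matrix.mulVec_mulVec, Matrix.mul_assoc]
    rw [aux_inv_comm X Y]
  · rw [hXY, hYX, Matrix.isUnit_iff_isUnit_det, Matrix.isUnit_iff_isUnit_det, hdet]
end
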